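/- arXiv:1008.3649 — 4 statements merged into one kernel-verified Lean document; each statement's English description precedes it below -/
import Mathlib

section
/- For all real θ not in 2πℤ and all t ≥ 0, one has log|1 - e^{iθ}| ≤ log|1 - e^{-t}e^{iθ}| + t/2. -/
theorem Complex.sq_norm_one_sub_ofReal_mul {z : ℂ} (hz : ‖z‖ = 1) (r : ℝ) :
    ‖1 - r * z‖ ^ 2 = (1 - r) ^ 2 + r * ‖1 - z‖ ^ 2 := by
  have hz' : z.re * z.re + z.im * z.im = 1 := by
    rw [← Complex.normSq_apply, ← Complex.sq_norm, hz, one_pow]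
  simp only [Complex.sq_norm, Complex.normSq_apply, Complex.sub_re, Complex.sub_im,
    Complex.one_re, Complex.one_im, Complex.re_ofReal_mul, Complex.im_ofReal_mul]
  linear_combination (r ^ 2 - r) * hz'

theorem Complex.log_norm_one_sub_add_half_log_le {z : ℂ} (hz : ‖z‖ = 1) (hz1 : z ≠ 1)
    {r : ℝ} (hr : 0 < r) :
    Real.log ‖1 - z‖ + Real.log r / 2 ≤ Real.log ‖1 - r * z‖ := by
  have hnorm : 0 < ‖1 - z‖ := norm_pos_iff.mpr (sub_ne_zero.mpr hz1.symm)
  have hpos : 0 < r * ‖1 - z‖ ^ 2 := by positivity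
  have hle : r * ‖1 - z‖ ^ 2 ≤ ‖1 - r * z‖ ^ 2 := by
    rw [Complex.sq_norm_one_sub_ofReal_mul hz]
    exact le_add_of_nonneg_left (sq_nonneg _)
  have hlog := Real.log_le_log hpos hle
  rw [Real.log_mul hr.ne' (pow_pos hnorm 2).ne', Real.log_pow, Real.log_pow] at hlog
  push_cast at hlog
  linarith

theorem stmt_0_general (θ : ℝ) (hθ : ∀ k : ℤ, θ ≠ 2 * Real.pi * k) (t : ℝ) :
    Real.log ‖1 - Complex.exp (θ * Complex.I)‖ ≤
      Real.log ‖1 - Real.exp (-t) * Complex.exp (θ * Complex.I)‖ + t / 2 := by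
  have hz1 : Complex.exp (θ * Complex.I) ≠ 1 := by
    rw [Ne, Complex.exp_eq_one_iff]
    rintro ⟨k, hk⟩
    apply hθ k
    have hk' : (θ : ℂ) * Complex.I = (2 * Real.pi * k : ℂ) * Complex.I := hk.trans (by ring)
    exact_mod_cast mul_right_cancel₀ Complex.I_ne_zero hk'
  have hlog := Complex.log_norm_one_sub_add_half_log_le (Complex.norm_exp_ofReal_mul_I θ) hz1
    (Real.exp_pos (-t))
  rw [Real.log_exp] at hlog
  linarith

theorem stmt_0 (θ : ℝ) (hθ : ∀ k : ℤ, θ ≠ 2 * Real.pi * k) (t : ℝ) (ht : 0 ≤ t) :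
    Real.log ‖1 - Complex.exp (θ * Complex.I)‖ ≤
      Real.log ‖1 - Real.exp (-t) * Complex.exp (θ * Complex.I)‖ + t / 2 :=
  stmt_0_general θ hθ t
end

section
/- For every positive integer J and every complex number z with |z| ≤ 1 and z^j ≠ 1 for all 1 ≤ j ≤ J, one has ∑_{j=1}^J (1 - j/(J+1)) log|1 - z^j| ≤ (1/2) log(J/2 + 1) + 1/2. -/
/-!
Put `P(z) = ∏_{d=1}^J (1 - z^d)^(J+1-d)`, so that the weighted sum equals `log ‖P(z)‖ / (J+1)`.
On the unit circle `‖P(w)‖` is the modulus of the Vandermonde determinant of `1, w, …, w^J`,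
a matrix with unimodular entries, so Hadamard's bound (in its AM–GM form for the eigenvalues of
`Mᴴ M`) gives `‖P(w)‖² ≤ (J+1)^(J+1)`. The maximum modulus principle extends this to the closed
disc, hence the sum is at most `log (J+1) / 2 ≤ log (J/2+1) / 2 + log 2 / 2`.
-/

open Finset Matrix
open scoped ComplexOrder

theorem Real.prod_le_arith_mean_pow {ι : Type*} (s : Finset ι) {f : ι → ℝ}
    (hf : ∀ i ∈ s, 0 ≤ f i) : ∏ i ∈ s, f i ≤ ((∑ i ∈ s, f i) / #s) ^ #s := by
  rcases s.eq_empty_or_nonempty with rfl | hs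
  · simp
  have amgm := Real.geom_mean_le_arith_mean s (fun _ ↦ 1) f (fun _ _ ↦ zero_le_one)
    (by simpa using hs.card_pos) hf
  simp only [Real.rpow_one, sum_const, nsmul_eq_mul, mul_one, one_mul] at amgm
  calc ∏ i ∈ s, f i = ((∏ i ∈ s, f i) ^ (#s : ℝ)⁻¹) ^ #s :=
        (Real.rpow_inv_natCast_pow (prod_nonneg hf) hs.card_ne_zero).symm
    _ ≤ _ := by gcongr; exact Real.rpow_nonneg (prod_nonneg hf) _

section Hadamard

variable {n 𝕜 : Type*} [Fintype n] [DecidableEq n] [RCLike 𝕜]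

theorem Matrix.PosSemidef.re_det_le_re_trace_div_pow {A : Matrix n n 𝕜} (hA : A.PosSemidef) :
    RCLike.re A.det ≤ (RCLike.re A.trace / Fintype.card n) ^ Fintype.card n := by
  rw [hA.isHermitian.det_eq_prod_eigenvalues, hA.isHermitian.trace_eq_sum_eigenvalues]
  simp only [← RCLike.ofReal_prod, ← RCLike.ofReal_sum, RCLike.ofReal_re]
  exact Real.prod_le_arith_mean_pow _ fun i _ ↦ hA.eigenvalues_nonneg i

theorem Matrix.norm_det_sq_le (M : Matrix n n 𝕜) :
    ‖M.det‖ ^ 2 ≤ ((∑ i, ∑ j, ‖M i j‖ ^ 2) / Fintype.card n) ^ Fintype.card n := by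
  have hdet : RCLike.re (Mᴴ * M).det = ‖M.det‖ ^ 2 := by
    rw [det_mul, det_conjTranspose, RCLike.star_def, RCLike.conj_mul, ← RCLike.ofReal_pow,
      RCLike.ofReal_re]
  have htrace : RCLike.re (Mᴴ * M).trace = ∑ i, ∑ j, ‖M i j‖ ^ 2 := by
    simp only [trace, diag_apply, mul_apply, conjTranspose_apply, RCLike.star_def,
      RCLike.conj_mul, map_sum, ← RCLike.ofReal_pow, RCLike.ofReal_re]
    exact sum_comm
  rw [← hdet, ← htrace]
  exact (posSemidef_conjTranspose_mul_self M).re_det_le_re_trace_div_pow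

theorem Matrix.norm_det_sq_le_card_pow_of_norm_eq_one {M : Matrix n n 𝕜}
    (hM : ∀ i j, ‖M i j‖ = 1) : ‖M.det‖ ^ 2 ≤ (Fintype.card n : ℝ) ^ Fintype.card n := by
  refine M.norm_det_sq_le.trans_eq ?_
  simp [hM]

end Hadamard

theorem Finset.prod_Icc_one_eq_prod_range {M : Type*} [CommMonoid M] (F : ℕ → M) (n : ℕ) :
    ∏ d ∈ Icc 1 n, F d = ∏ d ∈ range n, F (d + 1) := by
  rw [range_eq_Ico, prod_Ico_add', zero_add, Ico_add_one_right_eq_Icc]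

theorem Fin.prod_prod_Ioi_sub {M : Type*} [CommMonoid M] (F : ℕ → M) (n : ℕ) :
    ∏ i : Fin (n + 1), ∏ j ∈ Ioi i, F (j - i) = ∏ d ∈ Icc 1 n, F d ^ (n + 1 - d) := by
  simp only [prod_Icc_one_eq_prod_range, Nat.add_sub_add_right]
  induction n with
  | zero => simp
  | succ n ih =>
    have hexp : ∀ d ∈ range (n + 1), F (d + 1) ^ (n + 1 - d) = F (d + 1) * F (d + 1) ^ (n - d) :=
      fun d hd ↦ by rw [Nat.sub_add_comm (mem_range_succ_iff.mp hd), pow_succ']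
    rw [Fin.prod_univ_succ, Fin.prod_Ioi_zero, prod_congr rfl hexp, prod_mul_distrib,
      prod_range_succ (fun d ↦ F (d + 1) ^ (n - d)), Nat.sub_self, pow_zero, mul_one, ← ih]
    simp [Fin.prod_univ_eq_prod_range (fun j ↦ F (j + 1))]

theorem Complex.norm_det_vandermonde_pow {w : ℂ} (hw : ‖w‖ = 1) (n : ℕ) :
    ‖(vandermonde fun i : Fin (n + 1) ↦ w ^ (i : ℕ)).det‖ =
      ‖∏ d ∈ Icc 1 n, (1 - w ^ d) ^ (n + 1 - d)‖ := by
  simp only [det_vandermonde, norm_prod, ← Fin.prod_prod_Ioi_sub]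
  refine prod_congr rfl fun i _ ↦ prod_congr rfl fun j hj ↦ ?_
  obtain ⟨k, hk⟩ := Nat.exists_eq_add_of_le (mem_Ioi.mp hj).le
  rw [hk, pow_add, Nat.add_sub_cancel_left, ← mul_sub_one, norm_mul, norm_pow, hw, one_pow,
    one_mul, norm_sub_rev]

theorem Complex.norm_prod_one_sub_pow_sq_le {z : ℂ} (hz : ‖z‖ ≤ 1) (n : ℕ) :
    ‖∏ d ∈ Icc 1 n, (1 - z ^ d) ^ (n + 1 - d)‖ ^ 2 ≤ ((n : ℝ) + 1) ^ (n + 1) := by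
  let P : ℂ → ℂ := fun x ↦ (∏ d ∈ Icc 1 n, (1 - x ^ d) ^ (n + 1 - d)) ^ 2
  have hP : Differentiable ℂ P := by fun_prop
  have hboundary : ∀ w ∈ frontier (Metric.ball (0 : ℂ) 1), ‖P w‖ ≤ ((n : ℝ) + 1) ^ (n + 1) := by
    intro w hw
    rw [frontier_ball 0 one_ne_zero, mem_sphere_zero_iff_norm] at hw
    have := norm_det_sq_le_card_pow_of_norm_eq_one
      (M := vandermonde fun i : Fin (n + 1) ↦ w ^ (i : ℕ)) fun i j ↦ by simp [← pow_mul, hw]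
    simpa [P, norm_det_vandermonde_pow hw] using this
  simpa [P] using Complex.norm_le_of_forall_mem_frontier_norm_le Metric.isBounded_ball
    hP.diffContOnCl hboundary (by rwa [closure_ball 0 one_ne_zero, mem_closedBall_zero_iff])

theorem Complex.sum_fejer_mul_log_norm_one_sub_pow {J : ℕ} {z : ℂ}
    (hroots : ∀ j : ℕ, 1 ≤ j → j ≤ J → z ^ j ≠ 1) :
    ∑ j ∈ Icc 1 J, (1 - (j : ℝ) / ((J : ℝ) + 1)) * Real.log ‖1 - z ^ j‖ =
      Real.log ‖∏ d ∈ Icc 1 J, (1 - z ^ d) ^ (J + 1 - d)‖ / ((J : ℝ) + 1) := by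
  have hne : ∀ d ∈ Icc 1 J, (1 - z ^ d) ^ (J + 1 - d) ≠ 0 := fun d hd ↦
    pow_ne_zero _ <| sub_ne_zero.mpr (hroots d (mem_Icc.mp hd).1 (mem_Icc.mp hd).2).symm
  rw [norm_prod, Real.log_prod fun d hd ↦ norm_ne_zero_iff.mpr (hne d hd), sum_div]
  refine sum_congr rfl fun d hd ↦ ?_
  rw [norm_pow, Real.log_pow, Nat.cast_sub (by grind)]
  push_cast
  field_simp

theorem stmt_3_general (J : ℕ) (z : ℂ) (hz : ‖z‖ ≤ 1)
    (hroots : ∀ j : ℕ, 1 ≤ j → j ≤ J → z ^ j ≠ 1) :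
    ∑ j ∈ Finset.Icc 1 J, (1 - (j : ℝ) / ((J : ℝ) + 1)) * Real.log (‖1 - z ^ j‖) ≤
      (1 / 2) * Real.log ((J : ℝ) / 2 + 1) + 1 / 2 := by
  rw [Complex.sum_fejer_mul_log_norm_one_sub_pow hroots]
  set P := ∏ d ∈ Icc 1 J, (1 - z ^ d) ^ (J + 1 - d)
  have hJ1 : (0 : ℝ) < J + 1 := by positivity
  have hlogP : 2 * Real.log ‖P‖ ≤ (J + 1) * Real.log (J + 1) := by
    rcases eq_or_ne P 0 with hP | hP
    · rw [hP, norm_zero, Real.log_zero, mul_zero]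
      exact mul_nonneg hJ1.le (Real.log_nonneg (by simp))
    have := Real.log_le_log (by positivity) (Complex.norm_prod_one_sub_pow_sq_le hz J)
    rwa [Real.log_pow, Real.log_pow, Nat.cast_two, Nat.cast_add_one] at this
  have hlog2 : Real.log ((J : ℝ) + 1) ≤ Real.log ((J : ℝ) / 2 + 1) + 1 := by
    calc Real.log ((J : ℝ) + 1) ≤ Real.log (2 * ((J : ℝ) / 2 + 1)) :=
          Real.log_le_log hJ1 (by linarith)
      _ = Real.log 2 + Real.log ((J : ℝ) / 2 + 1) := Real.log_mul two_ne_zero (by positivity)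
      _ ≤ _ := by linarith [Real.log_two_lt_d9]
  rw [div_le_iff₀ hJ1]
  linarith [mul_le_mul_of_nonneg_left hlog2 hJ1.le]

theorem stmt_3 (J : ℕ) (hJ : 0 < J) (z : ℂ) (hz : ‖z‖ ≤ 1)
    (hroots : ∀ j : ℕ, 1 ≤ j → j ≤ J → z ^ j ≠ 1) :
    ∑ j ∈ Finset.Icc 1 J, (1 - (j : ℝ) / ((J : ℝ) + 1)) * Real.log (‖1 - z ^ j‖) ≤
      (1 / 2) * Real.log ((J : ℝ) / 2 + 1) + 1 / 2 :=
  stmt_3_general J z hz hroots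
end

section
/- Let f ∈ ℤ[X] be monic of degree D ≥ 1 all of whose coefficients are congruent to 1 modulo m (m ≥ 2 an integer), with f(1) ≠ 0, and suppose f shares no common roots with X^D + ⋯ + X + 1. Then ∑_{f(α)=0} h(α) ≥ (D/(D+1))·log(m/2), where h is the absolute logarithmic Weil height and the sum is over the roots of f with multiplicity. -/
open Polynomial

section Aux

-- small real lemma
lemma max_log_eq (t : ℝ) (ht : 0 ≤ t) : max (Real.log t) 0 = Real.log (max 1 t) := by
  rcases le_total t 1 with h | h
  · rw [max_eq_left h, max_eq_right (Real.log_nonpos ht h)]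
    simp
  · rw [max_eq_right h, max_eq_left]
    exact Real.log_nonneg h

lemma realIneq (D m : ℕ) (hm : 2 ≤ m) (β : Fin D → ℂ)
    (h : ((m : ℝ)) ^ D ≤ ‖∏ i, (β i ^ (D + 1) - 1)‖) :
    (D : ℝ) / ((D : ℝ) + 1) * Real.log ((m : ℝ) / 2) ≤
      ∑ i, Real.log (max 1 (‖β i‖)) := by
  set M : Fin D → ℝ := fun i => max 1 (‖β i‖) with hM
  have hM1 : ∀ i, 1 ≤ M i := fun i => le_max_left _ _
  have hMpos : ∀ i, 0 < M i := fun i => lt_of_lt_of_le one_pos (hM1 i)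
  have hbound : ∀ i, ‖β i ^ (D + 1) - 1‖ ≤ 2 * M i ^ (D + 1) := by
    intro i
    calc ‖β i ^ (D + 1) - 1‖ ≤ ‖β i ^ (D + 1)‖ + ‖(1:ℂ)‖ := by
          exact norm_sub_le _ _
      _ = ‖β i‖ ^ (D + 1) + 1 := by rw [norm_pow, norm_one]
      _ ≤ M i ^ (D + 1) + M i ^ (D + 1) := by
          gcongr
          · exact le_max_right _ _
          · exact one_le_pow₀ (hM1 i)
      _ = 2 * M i ^ (D + 1) := by ring
  have hprod : ((m : ℝ)) ^ D ≤ 2 ^ D * (∏ i, M i) ^ (D + 1) := by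
    calc ((m : ℝ)) ^ D ≤ ‖∏ i, (β i ^ (D + 1) - 1)‖ := h
      _ = ∏ i, ‖β i ^ (D + 1) - 1‖ := by rw [norm_prod]
      _ ≤ ∏ i, 2 * M i ^ (D + 1) := by
          apply Finset.prod_le_prod (fun i _ => norm_nonneg _)
            (fun i _ => hbound i)
      _ = 2 ^ D * (∏ i, M i) ^ (D + 1) := by
          rw [Finset.prod_mul_distrib, Finset.prod_const, ← Finset.prod_pow]
          simp
  have hP : 0 < ∏ i, M i := Finset.prod_pos fun i _ => hMpos i
  have h2 : ((m : ℝ) / 2) ^ D ≤ (∏ i, M i) ^ (D + 1) := by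
    rw [div_pow, div_le_iff₀ (by positivity)]
    linarith [hprod]
  have hlog := Real.log_le_log (by positivity) h2
  rw [Real.log_pow, Real.log_pow] at hlog
  have hPLog : Real.log (∏ i, M i) = ∑ i, Real.log (M i) :=
    Real.log_prod (fun i _ => (hMpos i).ne')
  rw [hPLog] at hlog
  rw [div_mul_eq_mul_div, div_le_iff₀ (by positivity)]
  calc (D : ℝ) * Real.log ((m : ℝ) / 2) ≤ ((D : ℝ) + 1) * ∑ i, Real.log (M i) := by push_cast at hlog ⊢; linarith
    _ = (∑ i, Real.log (M i)) * ((D : ℝ) + 1) := by ring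

lemma keyInt (f : Polynomial ℤ) (D m : ℕ) (hD : f.natDegree = D) (hm : 2 ≤ m)
    (hcong : ∀ i ≤ D, (m : ℤ) ∣ f.coeff i - 1) (hf1 : f.eval 1 ≠ 0)
    (hnz : ∀ ζ : CyclotomicField (D + 1) ℚ, ζ ^ (D + 1) = 1 → ζ ≠ 1 →
      Polynomial.aeval ζ f ≠ 0) :
    ∃ n : ℤ, (m : ℤ) ^ D ∣ n ∧ n ≠ 0 ∧
      ((n : ℚ) : CyclotomicField (D + 1) ℚ) =
        ∏ ζ ∈ Polynomial.nthRootsFinset (D + 1) (1 : CyclotomicField (D + 1) ℚ),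
          Polynomial.aeval ζ f := by
  classical
  set E := CyclotomicField (D + 1) ℚ with hE
  have hDpos : 0 < D + 1 := D.succ_pos
  set s : Finset E := Polynomial.nthRootsFinset (D + 1) (1 : E) with hs
  have hmem : ∀ ζ : E, ζ ∈ s ↔ ζ ^ (D + 1) = 1 := fun ζ => Polynomial.mem_nthRootsFinset hDpos 1
  -- the product
  set N : E := ∏ ζ ∈ s, Polynomial.aeval ζ f with hN
  -- finite dimensionality etc.
  haveI : NeZero ((D + 1 : ℕ) : ℚ) := ⟨by exact_mod_cast D.succ_ne_zero⟩
  haveI : IsCyclotomicExtension {D + 1} ℚ E := CyclotomicField.isCyclotomicExtension (D + 1) ℚ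
  haveI : FiniteDimensional ℚ E := IsCyclotomicExtension.finiteDimensional {D + 1} ℚ E
  haveI : IsGalois ℚ E := IsCyclotomicExtension.isGalois {D + 1} ℚ E
  -- N is fixed by the Galois group
  have hfix : ∀ g : E ≃ₐ[ℚ] E, g N = N := by
    intro g
    rw [hN, map_prod]
    refine Finset.prod_nbij' (fun ζ => g ζ) (fun ζ => g.symm ζ) ?_ ?_ ?_ ?_ ?_
    · intro ζ hζ
      rw [hmem] at hζ ⊢
      rw [← map_pow, hζ, map_one]
    · intro ζ hζ
      rw [hmem] at hζ ⊢
      rw [← map_pow, hζ, map_one]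
    · intro ζ _; exact g.symm_apply_apply ζ
    · intro ζ _; exact g.apply_symm_apply ζ
    · intro ζ _
      exact (Polynomial.aeval_algHom_apply
        ((AlgEquiv.restrictScalars ℤ g : E ≃ₐ[ℤ] E) : E →ₐ[ℤ] E) ζ f).symm
  -- hence N is rational
  have hbot : N ∈ (⊥ : IntermediateField ℚ E) := by
    have h12 : IntermediateField.fixedField (⊤ : Subgroup (E ≃ₐ[ℚ] E)) = ⊥ :=
      ((IsGalois.tfae (F := ℚ) (E := E)).out 0 1).mp (by infer_instance)
    rw [← h12]
    rintro ⟨g, -⟩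
    exact hfix g
  obtain ⟨q, hq⟩ := IntermediateField.mem_bot.mp hbot
  -- integrality
  set S : Subalgebra ℤ E := integralClosure ℤ E with hS
  have hroot_int : ∀ ζ : E, ζ ∈ s → ζ ∈ S := by
    intro ζ hζ
    rw [hmem] at hζ
    refine ⟨X ^ (D + 1) - 1, monic_X_pow_sub_C 1 (by omega), ?_⟩
    simp [hζ]
  have haeval_mem : ∀ ζ : E, ζ ∈ S → Polynomial.aeval ζ f ∈ S := by
    intro ζ hζ
    have : Polynomial.aeval ζ f ∈ Algebra.adjoin ℤ ({ζ} : Set E) :=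
      Polynomial.aeval_mem_adjoin_singleton ℤ ζ
    exact Algebra.adjoin_le (Set.singleton_subset_iff.mpr hζ) this
  have hNint : N ∈ S := by
    rw [hN]
    exact Subalgebra.prod_mem S fun ζ hζ => haeval_mem ζ (hroot_int ζ hζ)
  -- 1 is a root
  have h1s : (1 : E) ∈ s := by rw [hmem]; exact one_pow _
  -- factor out m from the nontrivial roots
  have hfac : ∀ ζ : E, ζ ∈ s.erase 1 → ∃ γ : E, γ ∈ S ∧ Polynomial.aeval ζ f = (m : E) * γ := by
    intro ζ hζ'
    obtain ⟨hζ1, hζs⟩ := Finset.mem_erase.mp hζ'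
    have hζpow : ζ ^ (D + 1) = 1 := (hmem ζ).mp hζs
    have hζS : ζ ∈ S := hroot_int ζ hζs
    -- geometric sum vanishes
    have hgeo : ∑ i ∈ Finset.range (D + 1), ζ ^ i = 0 := by
      have := geom_sum_mul ζ (D + 1)
      rw [hζpow, sub_self] at this
      exact (mul_eq_zero.mp this).resolve_right (sub_ne_zero.mpr hζ1)
    -- choose the quotients
    choose d hd using fun i (hi : i ≤ D) => hcong i hi
    refine ⟨∑ i ∈ Finset.attach (Finset.range (D + 1)),
        (d i.1 (by have := Finset.mem_range.mp i.2; omega) : E) * ζ ^ i.1, ?_, ?_⟩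
    · refine Subalgebra.sum_mem S fun i _ => ?_
      exact S.mul_mem (S.intCast_mem _) (S.pow_mem hζS _)
    · have heval : Polynomial.aeval ζ f = ∑ i ∈ Finset.range (D + 1), (f.coeff i : E) * ζ ^ i := by
        rw [Polynomial.aeval_eq_sum_range' (p := f) (n := D + 1) (by omega) ζ]
        refine Finset.sum_congr rfl fun i _ => ?_
        rw [zsmul_eq_mul]
      rw [heval, ← Finset.sum_attach (Finset.range (D + 1)) (fun i => (f.coeff i : E) * ζ ^ i)]
      rw [Finset.mul_sum]
      have hzero : (0 : E) = ∑ i ∈ Finset.attach (Finset.range (D + 1)), (1 : E) * ζ ^ i.1 := by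
        rw [← hgeo, ← Finset.sum_attach (Finset.range (D + 1)) (fun i => ζ ^ i)]
        simp
      calc ∑ i ∈ Finset.attach (Finset.range (D + 1)), (f.coeff i.1 : E) * ζ ^ i.1
          = ∑ i ∈ Finset.attach (Finset.range (D + 1)), ((f.coeff i.1 - 1 : ℤ) : E) * ζ ^ i.1
            + ∑ i ∈ Finset.attach (Finset.range (D + 1)), (1 : E) * ζ ^ i.1 := by
            rw [← Finset.sum_add_distrib]
            refine Finset.sum_congr rfl fun i _ => ?_
            push_cast; ring
        _ = ∑ i ∈ Finset.attach (Finset.range (D + 1)), ((f.coeff i.1 - 1 : ℤ) : E) * ζ ^ i.1 := by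
            rw [← hzero, add_zero]
        _ = ∑ i ∈ Finset.attach (Finset.range (D + 1)),
              (m : E) * ((d i.1 (by have := Finset.mem_range.mp i.2; omega) : E) * ζ ^ i.1) := by
            refine Finset.sum_congr rfl fun i _ => ?_
            have hdi := hd i.1 (by have := Finset.mem_range.mp i.2; omega)
            rw [hdi, Int.cast_mul, Int.cast_natCast]; ring
  -- choose quotients
  choose! γ hγS hγ using hfac
  haveI : CharZero E := charZero_of_injective_algebraMap (algebraMap ℚ E).injective
  have h1eval : Polynomial.aeval (1 : E) f = ((f.eval 1 : ℤ) : E) := by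
    rw [Polynomial.aeval_def, Polynomial.eval₂_at_one]
    simp
  have hcard : (s.erase 1).card = D := by
    rw [Finset.card_erase_of_mem h1s]
    have hc : s.card = D + 1 := (IsCyclotomicExtension.zeta_spec (D + 1) ℚ E).card_nthRootsFinset
    omega
  have hNfac : N = (m : E) ^ D * (((f.eval 1 : ℤ) : E) * ∏ ζ ∈ s.erase 1, γ ζ) := by
    rw [hN, ← Finset.mul_prod_erase s _ h1s, h1eval,
      Finset.prod_congr rfl (fun ζ hζ => hγ ζ hζ), Finset.prod_mul_distrib,
      Finset.prod_const, hcard]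
    ring
  set Γ : E := ((f.eval 1 : ℤ) : E) * ∏ ζ ∈ s.erase 1, γ ζ with hΓ
  have hΓS : Γ ∈ S := by
    refine S.mul_mem (S.intCast_mem _) (Subalgebra.prod_mem S fun ζ hζ => hγS ζ hζ)
  have hmQ : ((m : ℚ)) ≠ 0 := by positivity
  have hΓeq : algebraMap ℚ E (q / (m : ℚ) ^ D) = Γ := by
    have hinj := (algebraMap ℚ E).injective
    have hmE : ((m : E)) ^ D ≠ 0 := pow_ne_zero _ (Nat.cast_ne_zero.mpr (by omega))
    apply mul_left_cancel₀ (a := (m : E) ^ D) hmE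
    rw [← hNfac, ← hq]
    rw [div_eq_mul_inv, map_mul, map_inv₀, map_pow]
    have : algebraMap ℚ E (m : ℚ) = (m : E) := by simp
    rw [this]
    rw [mul_comm ((algebraMap ℚ E) q), ← mul_assoc, mul_inv_cancel₀ hmE, one_mul]
  have hΓint : IsIntegral ℤ (q / (m : ℚ) ^ D) := by
    have : IsIntegral ℤ Γ := hΓS
    rwa [← hΓeq, isIntegral_algebraMap_iff (algebraMap ℚ E).injective] at this
  obtain ⟨z, hz⟩ := IsIntegrallyClosed.isIntegral_iff.mp hΓint
  have hNne : N ≠ 0 := by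
    rw [hN]
    refine Finset.prod_ne_zero_iff.mpr fun ζ hζ => ?_
    by_cases h1 : ζ = 1
    · subst h1
      rw [h1eval]
      exact_mod_cast Int.cast_ne_zero.mpr hf1
    · exact hnz ζ ((hmem ζ).mp hζ) h1
  refine ⟨(m : ℤ) ^ D * z, Dvd.intro z rfl, ?_, ?_⟩
  · have hqne : q ≠ 0 := by
      intro h
      rw [h, map_zero] at hq
      exact hNne hq.symm
    have hqz : q = (m : ℚ) ^ D * (z : ℚ) := by
      have : (z : ℚ) = q / (m : ℚ) ^ D := by exact_mod_cast hz
      rw [this]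
      field_simp
    intro h
    apply hqne
    rw [hqz]
    exact_mod_cast congrArg (fun t : ℤ => (t : ℚ)) h
  · have hqz : q = (m : ℚ) ^ D * (z : ℚ) := by
      have : (z : ℚ) = q / (m : ℚ) ^ D := by exact_mod_cast hz
      rw [this]
      field_simp
    have : (((m : ℤ) ^ D * z : ℤ) : ℚ) = q := by rw [hqz]; push_cast; ring
    rw [this, ← hq]
    exact (eq_ratCast (algebraMap ℚ E) q).symm

lemma toC (f : Polynomial ℤ) (D : ℕ)  (n : ℤ)
    (hn : ((n : ℚ) : CyclotomicField (D + 1) ℚ) =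
      ∏ ζ ∈ Polynomial.nthRootsFinset (D + 1) (1 : CyclotomicField (D + 1) ℚ),
        Polynomial.aeval ζ f) :
    ((n : ℂ)) = ∏ ζ ∈ Polynomial.nthRootsFinset (D + 1) (1 : ℂ), Polynomial.aeval ζ f := by
  classical
  set E := CyclotomicField (D + 1) ℚ with hE
  haveI : NeZero ((D + 1 : ℕ) : ℚ) := ⟨by exact_mod_cast D.succ_ne_zero⟩
  haveI : IsCyclotomicExtension {D + 1} ℚ E := CyclotomicField.isCyclotomicExtension (D + 1) ℚ
  haveI : FiniteDimensional ℚ E := IsCyclotomicExtension.finiteDimensional {D + 1} ℚ E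
  haveI : Algebra.IsAlgebraic ℚ E := Algebra.IsAlgebraic.of_finite ℚ E
  let φ : E →ₐ[ℚ] ℂ := IsAlgClosed.lift
  have hinj : Function.Injective φ := φ.toRingHom.injective
  have himg : (Polynomial.nthRootsFinset (D + 1) (1 : E)).image φ
      = Polynomial.nthRootsFinset (D + 1) (1 : ℂ) := by
    apply Finset.eq_of_subset_of_card_le
    · intro x hx
      obtain ⟨ζ, hζ, rfl⟩ := Finset.mem_image.mp hx
      rw [Polynomial.mem_nthRootsFinset D.succ_pos] at hζ ⊢
      rw [← map_pow, hζ, map_one]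
    · rw [Finset.card_image_of_injective _ hinj]
      rw [(Complex.isPrimitiveRoot_exp (D + 1) (by omega)).card_nthRootsFinset]
      have hc : (Polynomial.nthRootsFinset (D + 1) (1 : E)).card = D + 1 :=
        (IsCyclotomicExtension.zeta_spec (D + 1) ℚ E).card_nthRootsFinset
      omega
  have hcast : (n : ℂ) = φ ((n : ℚ) : E) := by
    rw [show ((n : ℚ) : E) = ((n : ℚ) : E) from rfl]
    rw [show ((n : ℚ) : E) = algebraMap ℚ E (n : ℚ) from (eq_ratCast (algebraMap ℚ E) _).symm]
    rw [AlgHom.commutes]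
    push_cast
    rfl
  rw [hcast, hn, map_prod, ← himg, Finset.prod_image (fun x _ y _ h => hinj h)]
  refine Finset.prod_congr rfl fun ζ _ => ?_
  exact (Polynomial.aeval_algHom_apply (φ.restrictScalars ℤ) ζ f).symm

lemma prodC {K : Type*} [Field K] (f : Polynomial ℤ) (D : ℕ) (α : Fin D → K)
    (hsplit : f.map (algebraMap ℤ K) = ∏ i, (Polynomial.X - Polynomial.C (α i)))
    (σ : K →+* ℂ) :
    ∏ ζ ∈ Polynomial.nthRootsFinset (D + 1) (1 : ℂ), Polynomial.aeval ζ f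
      = ∏ i, ((σ (α i)) ^ (D + 1) - 1) := by
  classical
  have hmap : f.map (Int.castRingHom ℂ) = ∏ i, (Polynomial.X - Polynomial.C (σ (α i))) := by
    have h1 : f.map (Int.castRingHom ℂ) = (f.map (algebraMap ℤ K)).map σ := by
      rw [Polynomial.map_map]
      congr 1
      exact RingHom.ext_int _ _
    rw [h1, hsplit, Polynomial.map_prod]
    simp
  have haeval : ∀ ζ : ℂ, Polynomial.aeval ζ f = ∏ i, (ζ - σ (α i)) := by
    intro ζ
    rw [Polynomial.aeval_def, ← Polynomial.eval_map]
    rw [show algebraMap ℤ ℂ = Int.castRingHom ℂ from rfl, hmap]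
    simp [Polynomial.eval_prod]
  have hXpow : ∀ β : ℂ, ∏ ζ ∈ Polynomial.nthRootsFinset (D + 1) (1 : ℂ), (β - ζ) = β ^ (D + 1) - 1 := by
    intro β
    have := Polynomial.X_pow_sub_one_eq_prod D.succ_pos (Complex.isPrimitiveRoot_exp (D + 1) (by omega))
    have he := congrArg (Polynomial.eval β) this
    simpa [Polynomial.eval_prod] using he.symm
  have hcards : (Polynomial.nthRootsFinset (D + 1) (1 : ℂ)).card = D + 1 :=
    (Complex.isPrimitiveRoot_exp (D + 1) (by omega)).card_nthRootsFinset
  calc ∏ ζ ∈ Polynomial.nthRootsFinset (D + 1) (1 : ℂ), Polynomial.aeval ζ f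
      = ∏ ζ ∈ Polynomial.nthRootsFinset (D + 1) (1 : ℂ), ∏ i, (ζ - σ (α i)) := by
        exact Finset.prod_congr rfl fun ζ _ => haeval ζ
    _ = ∏ i, ∏ ζ ∈ Polynomial.nthRootsFinset (D + 1) (1 : ℂ), (ζ - σ (α i)) := Finset.prod_comm
    _ = ∏ i, ((-1 : ℂ) ^ (D + 1) * ((σ (α i)) ^ (D + 1) - 1)) := by
        refine Finset.prod_congr rfl fun i _ => ?_
        rw [← hXpow (σ (α i))]
        rw [show ((-1 : ℂ)) ^ (D + 1) = ∏ _ζ ∈ Polynomial.nthRootsFinset (D + 1) (1 : ℂ), (-1 : ℂ) by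
          rw [Finset.prod_const, hcards]]
        rw [← Finset.prod_mul_distrib]
        refine Finset.prod_congr rfl fun ζ _ => by ring
    _ = ∏ i, ((σ (α i)) ^ (D + 1) - 1) := by
        rw [Finset.prod_mul_distrib, Finset.prod_const, ← pow_mul]
        have heven : Even ((D + 1) * Finset.univ.card (α := Fin D)) := by
          rw [Finset.card_univ, Fintype.card_fin, Nat.mul_comm]
          exact Nat.even_mul_succ_self D
        rw [heven.neg_one_pow, one_mul]

lemma nonvanish {K : Type*} [Field K] [NumberField K] (f : Polynomial ℤ) (D : ℕ)
    (hf1 : f.eval 1 ≠ 0) (α : Fin D → K)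
    (hsplit : f.map (algebraMap ℤ K) = ∏ i, (Polynomial.X - Polynomial.C (α i)))
    (hnocommon : ∀ i, ∑ k ∈ Finset.range (D + 1), α i ^ k ≠ 0)
    {L : Type*} [Field L] [Algebra ℚ L] [FiniteDimensional ℚ L]
    (ζ : L) (hpow : ζ ^ (D + 1) = 1) (hζ1 : ζ ≠ 1) : Polynomial.aeval ζ f ≠ 0 := by
  intro hζ
  have hInt : IsIntegral ℚ ζ := IsIntegral.of_finite ℚ ζ
  set p := minpoly ℚ ζ with hp
  have hp1 : p ∣ f.map (algebraMap ℤ ℚ) := by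
    apply minpoly.dvd ℚ ζ
    rw [Polynomial.aeval_map_algebraMap]
    exact hζ
  have hp2 : p ∣ (Polynomial.X ^ (D + 1) - 1 : Polynomial ℚ) := by
    apply minpoly.dvd ℚ ζ
    simp [hpow]
  set pK := p.map (algebraMap ℚ K) with hpK
  have hmapmap : (f.map (algebraMap ℤ ℚ)).map (algebraMap ℚ K) = f.map (algebraMap ℤ K) := by
    rw [Polynomial.map_map]
    congr 1
    exact RingHom.ext_int _ _
  have hdvd1 : pK ∣ f.map (algebraMap ℤ K) := by
    rw [← hmapmap]
    exact Polynomial.map_dvd _ hp1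
  have hdvd2 : pK ∣ (Polynomial.X ^ (D + 1) - 1 : Polynomial K) := by
    have := Polynomial.map_dvd (algebraMap ℚ K) hp2
    simpa using this
  have hfKmonic : (f.map (algebraMap ℤ K)).Monic := by
    rw [hsplit]
    exact Polynomial.monic_prod_of_monic _ _ fun i _ => Polynomial.monic_X_sub_C _
  have hfKsplits : Polynomial.Splits (f.map (algebraMap ℤ K)) := by
    rw [hsplit]
    exact Polynomial.Splits.prod fun i _ => Polynomial.Splits.X_sub_C _
  have hpKsplits : Polynomial.Splits pK :=
    Polynomial.Splits.of_dvd hfKsplits hfKmonic.ne_zero hdvd1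
  have hdeg : pK.degree ≠ 0 := by
    rw [hpK, Polynomial.degree_map]
    exact (minpoly.degree_pos hInt).ne'
  obtain ⟨r, hr⟩ := hpKsplits.exists_eval_eq_zero hdeg
  have hrf : Polynomial.eval r (f.map (algebraMap ℤ K)) = 0 :=
    Polynomial.eval_eq_zero_of_dvd_of_eval_eq_zero hdvd1 hr
  have hrpow : r ^ (D + 1) = 1 := by
    have h0 : Polynomial.eval r (Polynomial.X ^ (D + 1) - 1 : Polynomial K) = 0 :=
      Polynomial.eval_eq_zero_of_dvd_of_eval_eq_zero hdvd2 hr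
    simp at h0
    linear_combination h0
  have hr1 : r ≠ 1 := by
    intro h
    subst h
    have h0 : Polynomial.eval 1 (f.map (algebraMap ℤ K)) = 0 :=
      Polynomial.eval_eq_zero_of_dvd_of_eval_eq_zero hdvd1 hr
    have : Polynomial.eval (1 : K) (f.map (algebraMap ℤ K)) = algebraMap ℤ K (f.eval 1) := by
      rw [Polynomial.eval_map, Polynomial.eval₂_at_one]
    rw [this] at h0
    exact hf1 (by exact_mod_cast (by simpa using h0 : ((f.eval 1 : ℤ) : K) = 0))
  obtain ⟨i, hi⟩ : ∃ i, α i = r := by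
    rw [hsplit, Polynomial.eval_prod] at hrf
    obtain ⟨i, -, hi⟩ := Finset.prod_eq_zero_iff.mp hrf
    simp only [Polynomial.eval_sub, Polynomial.eval_X, Polynomial.eval_C] at hi
    exact ⟨i, (sub_eq_zero.mp hi).symm⟩
  apply hnocommon i
  have hgeom := geom_sum_mul (α i) (D + 1)
  rw [hi, hrpow, sub_self] at hgeom
  have := mul_eq_zero.mp hgeom
  rcases this with h | h
  · rw [hi]; exact h
  · exact absurd (by linear_combination h : r = 1) hr1

lemma max_mul_div_eq (a R t : ℝ) (ha : 0 ≤ a) (hR : 0 < R) :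
    max (a * t / R) 0 = a / R * max t 0 := by
  rcases le_total t 0 with h | h
  · rw [max_eq_right h, mul_zero, max_eq_right]
    exact div_nonpos_of_nonpos_of_nonneg (mul_nonpos_of_nonneg_of_nonpos ha h) hR.le
  · rw [max_eq_left h, max_eq_left]
    · ring
    · positivity

end Aux



open NumberField IsDedekindDomain
open scoped Classical

variable {K : Type*} [Field K] [NumberField K]

/-- `log ‖x‖_v` for a finite place `v` of the number field `K`, normalized so that
`‖x‖_v = (#(𝓞 K ⧸ v))^(- ord_v(x) / [K:ℚ])`, i.e. `‖x‖_v = |x|_v^([K_v:ℚ_v]/[K:ℚ])`. -/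
noncomputable def finLog (v : HeightOneSpectrum (𝓞 K)) (x : K) : ℝ :=
  if hx : x = 0 then 0
  else
    ((Multiplicative.toAdd (WithZero.unzero ((Valuation.ne_zero_iff (v.valuation K)).mpr hx)) : ℤ) : ℝ) *
        Real.log (Nat.card ((𝓞 K) ⧸ v.asIdeal)) / (Module.finrank ℚ K)

/-- The additive valuation `v(x) = -log ‖x‖_v` at a finite place `v` of `K`. -/
noncomputable def vlog (v : HeightOneSpectrum (𝓞 K)) (x : K) : ℝ := -finLog v x

/-- `log ‖x‖_v` for an infinite place `v` of the number field `K`, normalized so that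
`‖x‖_v = |x|_v^([K_v:ℚ_v]/[K:ℚ])`, i.e. the local degree is `v.mult`. -/
noncomputable def infLog (v : NumberField.InfinitePlace K) (x : K) : ℝ :=
  (v.mult : ℝ) * Real.log (v x) / (Module.finrank ℚ K)

/-- The absolute logarithmic Weil height of an element of a number field,
`h(x) = ∑_v max (log ‖x‖_v) 0` over all places of `K`. -/
noncomputable def height (x : K) : ℝ :=
  (∑ v : NumberField.InfinitePlace K, max (infLog v x) 0) +
    ∑' v : HeightOneSpectrum (𝓞 K), max (finLog v x) 0

theorem stmt_12 {K : Type*} [Field K] [NumberField K] (f : Polynomial ℤ) (hmonic : f.Monic)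
    (D : ℕ) (hD : f.natDegree = D) (hD1 : 1 ≤ D) (m : ℕ) (hm : 2 ≤ m)
    (hcong : ∀ i ≤ D, (m : ℤ) ∣ f.coeff i - 1) (hf1 : f.eval 1 ≠ 0)
    (α : Fin D → K)
    (hsplit : f.map (algebraMap ℤ K) = ∏ i, (Polynomial.X - Polynomial.C (α i)))
    (hnocommon : ∀ i, ∑ k ∈ Finset.range (D + 1), α i ^ k ≠ 0) :
    (D : ℝ) / ((D : ℝ) + 1) * Real.log ((m : ℝ) / 2) ≤ ∑ i, height (α i) := by
  classical
  haveI : FiniteDimensional ℚ (CyclotomicField (D + 1) ℚ) := by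
    haveI : NeZero ((D + 1 : ℕ) : ℚ) := ⟨by exact_mod_cast D.succ_ne_zero⟩
    haveI : IsCyclotomicExtension {D + 1} ℚ (CyclotomicField (D + 1) ℚ) :=
      CyclotomicField.isCyclotomicExtension (D + 1) ℚ
    exact IsCyclotomicExtension.finiteDimensional {D + 1} ℚ (CyclotomicField (D + 1) ℚ)
  obtain ⟨n, hdvd, hn0, hn⟩ := keyInt f D m hD hm hcong hf1
    (fun ζ hpow hζ1 => nonvanish f D hf1 α hsplit hnocommon ζ hpow hζ1)
  have hC : ((n : ℂ)) = ∏ ζ ∈ Polynomial.nthRootsFinset (D + 1) (1 : ℂ), Polynomial.aeval ζ f :=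
    toC f D n hn
  have habs : ((m : ℝ)) ^ D ≤ ‖(n : ℂ)‖ := by
    have h1 : (m : ℤ) ^ D ≤ |n| := Int.le_of_dvd (abs_pos.mpr hn0) ((dvd_abs _ _).mpr hdvd)
    rw [Complex.norm_intCast]
    exact_mod_cast h1
  set c : ℝ := (D : ℝ) / ((D : ℝ) + 1) * Real.log ((m : ℝ) / 2) with hc
  have hc0 : 0 ≤ c := by
    apply mul_nonneg
    · positivity
    · apply Real.log_nonneg
      rw [le_div_iff₀ (by norm_num : (0:ℝ) < 2)]
      have : (2 : ℝ) ≤ (m : ℝ) := by exact_mod_cast hm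
      linarith
  have hvnonneg : ∀ (v : NumberField.InfinitePlace K) (x : K), 0 ≤ v x := by
    intro v x
    rw [← NumberField.InfinitePlace.norm_embedding_eq]
    exact norm_nonneg _
  have hSv : ∀ v : NumberField.InfinitePlace K, c ≤ ∑ i, max (Real.log (v (α i))) 0 := by
    intro v
    have hvemb : ∀ x : K, ‖v.embedding x‖ = v x := fun x => by
      rw [← NumberField.InfinitePlace.norm_embedding_eq]
    have hri := realIneq D m hm (fun i => v.embedding (α i)) (by
      rw [← prodC f D α hsplit (v.embedding : K →+* ℂ), ← hC]; exact habs)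
    calc c ≤ ∑ i, Real.log (max 1 (‖v.embedding (α i)‖)) := hri
      _ = ∑ i, max (Real.log (v (α i))) 0 := by
          refine Finset.sum_congr rfl fun i _ => ?_
          rw [hvemb, ← max_log_eq _ (hvnonneg v (α i))]
  have hheight : ∀ x : K, (∑ v : NumberField.InfinitePlace K, max (infLog v x) 0) ≤ height x :=
    fun x => le_add_of_nonneg_right (tsum_nonneg fun v => le_max_right _ _)
  have hR : (0 : ℝ) < (Module.finrank ℚ K : ℝ) := by exact_mod_cast Module.finrank_pos
  have hsum1 : ∑ v : NumberField.InfinitePlace K, ((v.mult : ℝ) / (Module.finrank ℚ K : ℝ)) = 1 := by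
    rw [← Finset.sum_div]
    rw [show (∑ v : NumberField.InfinitePlace K, (v.mult : ℝ)) = (Module.finrank ℚ K : ℝ) from by
      exact_mod_cast (NumberField.InfinitePlace.sum_mult_eq (K := K))]
    exact div_self hR.ne'
  calc c = (∑ v : NumberField.InfinitePlace K, ((v.mult : ℝ) / (Module.finrank ℚ K : ℝ))) * c := by
        rw [hsum1, one_mul]
    _ = ∑ v : NumberField.InfinitePlace K, ((v.mult : ℝ) / (Module.finrank ℚ K : ℝ)) * c := by
        rw [Finset.sum_mul]
    _ ≤ ∑ v : NumberField.InfinitePlace K,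
          ((v.mult : ℝ) / (Module.finrank ℚ K : ℝ)) * (∑ i, max (Real.log (v (α i))) 0) := by
        refine Finset.sum_le_sum fun v _ => ?_
        exact mul_le_mul_of_nonneg_left (hSv v) (by positivity)
    _ = ∑ v : NumberField.InfinitePlace K, ∑ i, max (infLog v (α i)) 0 := by
        refine Finset.sum_congr rfl fun v _ => ?_
        rw [Finset.mul_sum]
        refine Finset.sum_congr rfl fun i _ => ?_
        rw [infLog, max_mul_div_eq _ _ _ (by positivity) hR]
    _ = ∑ i, ∑ v : NumberField.InfinitePlace K, max (infLog v (α i)) 0 := Finset.sum_comm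
    _ ≤ ∑ i, height (α i) := Finset.sum_le_sum fun i _ => hheight (α i)
end

section
/- Let m ≥ 2 and f ∈ ℤ[X] monic of degree D with f(1) ≠ 0. Let u ∈ ℤ[X] with deg u ≤ D - 1 be such that f(X) ≡ Φ_D(X) + u(X) (mod m), where Φ_D(X) = X^D + ⋯ + X + 1, and suppose f has no common root with Φ_D + u. Then ∑_{f(α)=0} h(α) ≥ (D/(D+1))·log(m / L(X^{D+1} - 1 + (X-1)u(X))), where L(g) denotes the sum of absolute values of the coefficients of g (the length) and h is the absolute logarithmic Weil height. -/
open NumberField IsDedekindDomain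
open scoped Classical

variable {K : Type*} [Field K] [NumberField K]

/-- The length of an integer polynomial: the sum of the absolute values of its coefficients. -/
noncomputable def polyLength (g : Polynomial ℤ) : ℝ := ∑ i ∈ g.support, |(g.coeff i : ℝ)|

/-! Put `g = X^(D+1) - 1 + (X - 1) u = (Φ_D + u)(X - 1)`. At a root `α` of `f` the congruence
`f ≡ Φ_D + u (mod m)` gives `g(α) = m c` with `c` a nonzero algebraic integer, so
`|N(g(α))| ≥ m^[K:ℚ]`. At every archimedean place `|g(α)|_w ≤ L(g) max(1, |α|_w)^(D+1)`, and
the weighted sum of the logarithms of these bounds is `log |N(g(α))|`. Hence `log (m / L(g))` is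
at most `D + 1` times the archimedean part of `h(α)` for each root; sum over the `D` roots. -/

open Polynomial

theorem polyLength_pos {g : ℤ[X]} (hg : g ≠ 0) : 0 < polyLength g :=
  Finset.sum_pos (fun i hi => by simpa using mem_support_iff.mp hi) (support_nonempty.mpr hg)

theorem norm_aeval_le_polyLength_mul {A : Type*} [NormedRing A] [NormOneClass A] {g : ℤ[X]}
    {n : ℕ} (hg : g.natDegree ≤ n) (z : A) :
    ‖aeval z g‖ ≤ polyLength g * max 1 ‖z‖ ^ n := by
  rw [aeval_def, eval₂_eq_sum, Polynomial.sum, polyLength, Finset.sum_mul]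
  refine (norm_sum_le _ _).trans (Finset.sum_le_sum fun i hi => ?_)
  rw [algebraMap_int_eq, eq_intCast, ← zsmul_eq_mul]
  calc ‖g.coeff i • z ^ i‖ ≤ |(g.coeff i : ℝ)| * ‖z‖ ^ i := by
        rw [← Int.norm_eq_abs]
        exact (norm_zsmul_le _ _).trans (by gcongr; exact norm_pow_le z i)
    _ ≤ |(g.coeff i : ℝ)| * max 1 ‖z‖ ^ n := by
        gcongr
        calc ‖z‖ ^ i ≤ max 1 ‖z‖ ^ i := by gcongr; exact le_max_right _ _
          _ ≤ max 1 ‖z‖ ^ n :=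
            pow_le_pow_right₀ (le_max_left _ _) ((le_natDegree_of_mem_supp i hi).trans hg)

namespace NumberField.InfinitePlace

theorem apply_aeval_le_polyLength_mul {F : Type*} [Field F] (w : InfinitePlace F) {g : ℤ[X]}
    {n : ℕ} (hg : g.natDegree ≤ n) (x : F) :
    w (aeval x g) ≤ polyLength g * max 1 (w x) ^ n := by
  have h : embedding w (aeval x g) = aeval (embedding w x) g :=
    (aeval_algHom_apply (embedding w).toIntAlgHom x g).symm
  rw [← norm_embedding_eq, ← norm_embedding_eq, h]
  exact norm_aeval_le_polyLength_mul hg _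

theorem sum_mult_mul_log_eq_log_abs_norm {x : K} (hx : x ≠ 0) :
    ∑ w : InfinitePlace K, (mult w : ℝ) * Real.log (w x) =
      Real.log |(Algebra.norm ℚ x : ℝ)| := by
  rw [← Rat.cast_abs, ← prod_eq_abs_norm,
    Real.log_prod fun w _ => pow_ne_zero _ (pos_iff.mpr hx).ne']
  simp only [Real.log_pow]

end NumberField.InfinitePlace

theorem one_le_abs_norm_of_isIntegral {c : K} (hc : IsIntegral ℤ c) (hc0 : c ≠ 0) :
    1 ≤ |Algebra.norm ℚ c| := by
  set a : 𝓞 K := ⟨c, hc⟩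
  have ha : a ≠ 0 := fun h => hc0 (congrArg ((↑) : 𝓞 K → K) h)
  rw [show c = (a : K) from rfl, ← Algebra.coe_norm_int]
  exact_mod_cast Int.one_le_abs (Algebra.norm_ne_zero_iff.mpr ha)

theorem abs_pow_finrank_le_abs_norm_intCast_mul {m : ℤ} {c : K} (hc : IsIntegral ℤ c)
    (hc0 : c ≠ 0) :
    |(m : ℚ)| ^ Module.finrank ℚ K ≤ |Algebra.norm ℚ (m * c)| := by
  have hm : (m : K) = algebraMap ℚ K m := by simp
  rw [map_mul, hm, Algebra.norm_algebraMap, abs_mul, abs_pow]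
  exact le_mul_of_one_le_right (by positivity) (one_le_abs_norm_of_isIntegral hc hc0)

noncomputable def infHeight (x : K) : ℝ := ∑ w : InfinitePlace K, max (infLog w x) 0

theorem infHeight_le_height (x : K) : infHeight x ≤ height x :=
  le_add_of_nonneg_right (tsum_nonneg fun _ => le_max_right _ _)

theorem finrank_mul_infHeight (x : K) :
    Module.finrank ℚ K * infHeight x =
      ∑ w : InfinitePlace K, (InfinitePlace.mult w : ℝ) * Real.posLog (w x) := by
  have hd : (Module.finrank ℚ K : ℝ) ≠ 0 := Nat.cast_ne_zero.mpr Module.finrank_pos.ne'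
  rw [infHeight, Finset.mul_sum]
  refine Finset.sum_congr rfl fun w _ => ?_
  rw [infLog, mul_max_of_nonneg _ _ (Nat.cast_nonneg _), mul_div_cancel₀ _ hd, mul_zero,
    Real.posLog, mul_max_of_nonneg _ _ (Nat.cast_nonneg _), mul_zero, max_comm]

open NumberField.InfinitePlace in
theorem log_div_polyLength_le_mul_infHeight {α c : K} {g : ℤ[X]} {n : ℕ} {m : ℤ}
    (hg : g.natDegree ≤ n) (hc : IsIntegral ℤ c) (hgα : aeval α g = m * c)
    (hne : aeval α g ≠ 0) : Real.log (m / polyLength g) ≤ n * infHeight α := by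
  have hm : m ≠ 0 := by rintro rfl; simp [hgα] at hne
  have hc0 : c ≠ 0 := by rintro rfl; simp [hgα] at hne
  have hL : 0 < polyLength g := polyLength_pos (by rintro rfl; simp at hne)
  have hd : (0 : ℝ) < Module.finrank ℚ K := Nat.cast_pos.mpr Module.finrank_pos
  have hlower : Module.finrank ℚ K * Real.log |(m : ℝ)| ≤
      ∑ w : InfinitePlace K, (mult w : ℝ) * Real.log (w (aeval α g)) := by
    rw [sum_mult_mul_log_eq_log_abs_norm hne, hgα, ← Real.log_pow]
    refine Real.log_le_log (by positivity) ?_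
    exact_mod_cast abs_pow_finrank_le_abs_norm_intCast_mul hc hc0
  have hupper (w : InfinitePlace K) :
      Real.log (w (aeval α g)) ≤ Real.log (polyLength g) + n * Real.posLog (w α) := by
    rw [Real.posLog_eq_log_max_one (apply_nonneg w α), ← Real.log_pow,
      ← Real.log_mul hL.ne' (by positivity)]
    exact Real.log_le_log (pos_iff.mpr hne) (apply_aeval_le_polyLength_mul w hg α)
  have hsum : ∑ w : InfinitePlace K, (mult w : ℝ) * Real.log (w (aeval α g)) ≤
      Module.finrank ℚ K * (Real.log (polyLength g) + n * infHeight α) := by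
    calc _ ≤ ∑ w : InfinitePlace K,
            (mult w : ℝ) * (Real.log (polyLength g) + n * Real.posLog (w α)) :=
          Finset.sum_le_sum fun w _ => mul_le_mul_of_nonneg_left (hupper w) (Nat.cast_nonneg _)
      _ = _ := by
          rw [mul_add, mul_left_comm, finrank_mul_infHeight, ← sum_mult_eq, Nat.cast_sum,
            Finset.sum_mul, Finset.mul_sum, ← Finset.sum_add_distrib]
          exact Finset.sum_congr rfl fun w _ => by ring
  rw [← Real.log_abs, abs_div, abs_of_pos hL, Real.log_div (by positivity) hL.ne']
  linarith [le_of_mul_le_mul_left (hlower.trans hsum) hd]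

theorem log_div_polyLength_le_mul_infHeight_of_C_dvd {α : K} {f g : ℤ[X]} {n : ℕ} {m : ℤ}
    (hα : IsIntegral ℤ α) (hf : aeval α f = 0) (hfg : C m ∣ f - g) (hg : aeval α g ≠ 0)
    (hn : g.natDegree ≤ n) : Real.log (m / polyLength g) ≤ n * infHeight α := by
  obtain ⟨q, hq⟩ := hfg
  have hgα : aeval α g = m * -aeval α q := by
    have h := congrArg (aeval α) hq
    simp only [map_sub, map_mul, eq_intCast, map_intCast, hf] at h
    linear_combination -h
  exact log_div_polyLength_le_mul_infHeight hn
    (adjoin_le_integralClosure hα (aeval_mem_adjoin_singleton ℤ α)).neg hgα hg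

theorem aeval_eq_zero_of_map_eq_prod {R A ι : Type*} [CommRing R] [CommRing A] [Algebra R A]
    [Fintype ι] {f : R[X]} {α : ι → A} (h : f.map (algebraMap R A) = ∏ i, (X - C (α i)))
    (i : ι) : aeval (α i) f = 0 := by
  rw [aeval_def, ← eval_map, h, eval_prod]
  exact Finset.prod_eq_zero (Finset.mem_univ i) (by simp)

theorem ne_one_of_aeval_eq_zero {A : Type*} [Ring A] [CharZero A] {f : ℤ[X]} {x : A}
    (hf : aeval x f = 0) (hf1 : f.eval 1 ≠ 0) : x ≠ 1 := by
  rintro rfl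
  rw [← map_one (algebraMap ℤ A), aeval_algebraMap_apply_eq_algebraMap_eval] at hf
  exact hf1 (by simpa only [algebraMap_int_eq, eq_intCast, Int.cast_eq_zero] using hf)

theorem natDegree_X_pow_succ_sub_one_add_le {R : Type*} [Ring R] {u : R[X]} {D : ℕ}
    (hu : u.degree < D) : (X ^ (D + 1) - 1 + (X - 1) * u).natDegree ≤ D + 1 := by
  refine natDegree_add_le_of_degree_le (by compute_degree) ?_
  exact (natDegree_mul_le_of_le (by compute_degree) (natDegree_le_of_degree_le hu.le)).trans
    (by omega)

theorem stmt_13_general {K : Type*} [Field K] [NumberField K] (m : ℕ)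
    (f : Polynomial ℤ) (hmonic : f.Monic) (D : ℕ) (hf1 : f.eval 1 ≠ 0)
    (u : Polynomial ℤ) (hu : u.degree < D)
    (hcong : ∀ i, (m : ℤ) ∣ (f - ((∑ k ∈ Finset.range (D + 1), Polynomial.X ^ k) + u)).coeff i)
    (α : Fin D → K)
    (hsplit : f.map (algebraMap ℤ K) = ∏ i, (Polynomial.X - Polynomial.C (α i)))
    (hnocommon : ∀ i,
      Polynomial.aeval (α i) ((∑ k ∈ Finset.range (D + 1), Polynomial.X ^ k) + u) ≠ 0) :
    (D : ℝ) / ((D : ℝ) + 1) *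
        Real.log ((m : ℝ) /
          polyLength (Polynomial.X ^ (D + 1) - 1 + (Polynomial.X - 1) * u)) ≤
      ∑ i, height (α i) := by
  set Φ : ℤ[X] := ∑ k ∈ Finset.range (D + 1), X ^ k
  set g : ℤ[X] := X ^ (D + 1) - 1 + (X - 1) * u
  have hfactor : g = (Φ + u) * (X - 1) := by rw [add_mul, geom_sum_mul]; ring
  have hfg : C (m : ℤ) ∣ f * (X - 1) - g := by
    rw [hfactor, ← sub_mul]
    exact ((C_dvd_iff_dvd_coeff _ _).mpr hcong).mul_right _
  have hle (i : Fin D) : Real.log (m / polyLength g) ≤ (D + 1) * height (α i) := by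
    have hroot : aeval (α i) f = 0 := aeval_eq_zero_of_map_eq_prod hsplit i
    have hgα : aeval (α i) g ≠ 0 := by
      rw [hfactor, map_mul]
      refine mul_ne_zero (hnocommon i) ?_
      simpa only [aeval_sub, aeval_X, map_one, sub_ne_zero] using ne_one_of_aeval_eq_zero hroot hf1
    calc Real.log (m / polyLength g) ≤ (D + 1 : ℕ) * infHeight (α i) := by
          exact_mod_cast log_div_polyLength_le_mul_infHeight_of_C_dvd ⟨f, hmonic, hroot⟩
            (by rw [map_mul, hroot, zero_mul]) hfg hgα (natDegree_X_pow_succ_sub_one_add_le hu)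
      _ ≤ (D + 1) * height (α i) := by push_cast; gcongr; exact infHeight_le_height _
  rw [div_mul_eq_mul_div, div_le_iff₀ (by positivity)]
  calc D * Real.log (m / polyLength g) = ∑ _i : Fin D, Real.log (m / polyLength g) := by simp
    _ ≤ ∑ i, (D + 1) * height (α i) := Finset.sum_le_sum fun i _ => hle i
    _ = (∑ i, height (α i)) * (D + 1) := by rw [← Finset.mul_sum, mul_comm]

theorem stmt_13 {K : Type*} [Field K] [NumberField K] (m : ℕ) (hm : 2 ≤ m)
    (f : Polynomial ℤ) (hmonic : f.Monic) (D : ℕ) (hD : f.natDegree = D) (hf1 : f.eval 1 ≠ 0)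
    (u : Polynomial ℤ) (hu : u.degree < D)
    (hcong : ∀ i, (m : ℤ) ∣ (f - ((∑ k ∈ Finset.range (D + 1), Polynomial.X ^ k) + u)).coeff i)
    (α : Fin D → K)
    (hsplit : f.map (algebraMap ℤ K) = ∏ i, (Polynomial.X - Polynomial.C (α i)))
    (hnocommon : ∀ i,
      Polynomial.aeval (α i) ((∑ k ∈ Finset.range (D + 1), Polynomial.X ^ k) + u) ≠ 0) :
    (D : ℝ) / ((D : ℝ) + 1) *
        Real.log ((m : ℝ) /
          polyLength (Polynomial.X ^ (D + 1) - 1 + (Polynomial.X - 1) * u)) ≤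
      ∑ i, height (α i) :=
  stmt_13_general m f hmonic D hf1 u hu hcong α hsplit hnocommon
end
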